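/- arXiv:2409.18634 — 2 statements merged into one kernel-verified Lean document; each statement's English description precedes it below -/
import Mathlib

section
/- The unique positive real root of x⁴ = 2x³ + 2x + 2 is strictly less than 2.4634. -/
private lemma cat_gt_two {x : ℝ} (hx : 0 < x) (h : x ^ 4 = 2 * x ^ 3 + 2 * x + 2) :
    2 < x := by
  nlinarith [pow_pos hx 3, pow_pos hx 2, sq_nonneg (x - 1), sq_nonneg x]

private lemma cat_bound {x : ℝ} (hx : 0 < x) (h : x ^ 4 = 2 * x ^ 3 + 2 * x + 2) :
    x < 2.4634 := by
  have h2 : 2 < x := cat_gt_two hx h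
  by_contra hc
  push_neg at hc
  nlinarith [sq_nonneg (x - 2.4634), sq_nonneg x, mul_pos hx hx,
    mul_pos (mul_pos hx hx) hx]

/-- The unique positive real root of `x⁴ = 2x³ + 2x + 2` is strictly less than `2.4634`. -/
theorem caterpillar_root_bound :
    (∃! x : ℝ, 0 < x ∧ x ^ 4 = 2 * x ^ 3 + 2 * x + 2) ∧
    ∀ x : ℝ, 0 < x → x ^ 4 = 2 * x ^ 3 + 2 * x + 2 → x < 2.4634 := by
  constructor
  · -- existence via IVT on [2, 2.4634]
    have hf : ContinuousOn (fun x : ℝ => x ^ 4 - 2 * x ^ 3 - 2 * x - 2) (Set.Icc 2 2.4634) := by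
      fun_prop
    have hivt := intermediate_value_Icc (by norm_num : (2:ℝ) ≤ 2.4634) hf
    have h0 : (0:ℝ) ∈ Set.Icc ((fun x : ℝ => x ^ 4 - 2 * x ^ 3 - 2 * x - 2) 2)
        ((fun x : ℝ => x ^ 4 - 2 * x ^ 3 - 2 * x - 2) 2.4634) := by
      constructor <;> norm_num
    obtain ⟨x, hxmem, hx0⟩ := hivt h0
    refine ⟨x, ⟨by linarith [hxmem.1], by simp only at hx0; linarith⟩, ?_⟩
    rintro y ⟨hy, hyeq⟩
    have hxpos : 0 < x := by linarith [hxmem.1]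
    have hxeq : x ^ 4 = 2 * x ^ 3 + 2 * x + 2 := by simp only at hx0; linarith
    have hy2 : 2 < y := cat_gt_two hy hyeq
    have hx2' : 2 < x := cat_gt_two hxpos hxeq
    have key : (y - x) * (y ^ 3 + y ^ 2 * x + y * x ^ 2 + x ^ 3
        - 2 * (y ^ 2 + y * x + x ^ 2) - 2) = 0 := by ring_nf; nlinarith [hxeq, hyeq]
    have hB : 0 < y ^ 3 + y ^ 2 * x + y * x ^ 2 + x ^ 3
        - 2 * (y ^ 2 + y * x + x ^ 2) - 2 := by nlinarith [mul_pos hy hxpos]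
    have : y - x = 0 := by
      rcases mul_eq_zero.mp key with h | h
      · exact h
      · linarith
    linarith
  · exact fun x hx h => cat_bound hx h
end

section
/- Let T₁ and T₂ be binary trees with leaf-label sets admitting non-trivial bipartitions (Y₁,Z₁) and (Y₂,Z₂), with splitting cores C₁ and C₂ each satisfying ∑_{K∈Cᵢ} 2^{-|K|} ≤ 1/2. If e₁, e₂ are two distinct edges not in T₁ or T₂, then the set C = {K ∪ {e₁} : K ∈ C₁} ∪ {K ∪ {e₂} : K ∈ C₂} satisfies ∑_{K∈C} 2^{-|K|} ≤ 1/2. -/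
open Finset

noncomputable def cutWeight {α : Type*} (C : Finset (Finset α)) : ℝ :=
  ∑ K ∈ C, (2 : ℝ) ^ (-(K.card : ℤ))

lemma cutWeight_nonneg {α : Type*} (C : Finset (Finset α)) : 0 ≤ cutWeight C :=
  sum_nonneg fun _ _ ↦ by positivity

lemma cutWeight_union_le {α : Type*} [DecidableEq α] (C D : Finset (Finset α)) :
    cutWeight (C ∪ D) ≤ cutWeight C + cutWeight D := by
  unfold cutWeight
  rw [← sum_union_inter]
  exact le_add_of_nonneg_right (cutWeight_nonneg _)

lemma cutWeight_image_insert {α : Type*} [DecidableEq α] {e : α} {C : Finset (Finset α)}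
    (he : ∀ K ∈ C, e ∉ K) : cutWeight (C.image (insert e)) = cutWeight C / 2 := by
  have hinj : Set.InjOn (insert e) (C : Set (Finset α)) := fun K hK L hL hKL ↦ by
    rw [← erase_insert (he K hK), hKL, erase_insert (he L hL)]
  unfold cutWeight
  rw [sum_image hinj, sum_div]
  refine sum_congr rfl fun K hK ↦ ?_
  rw [card_insert_of_notMem (he K hK), Nat.cast_succ, neg_add, zpow_add₀ two_ne_zero]
  norm_num [div_eq_mul_inv]

open Classical in
theorem splitting_core_weight_general {α : Type*} (E₁ E₂ : Set α)
    (C₁ C₂ : Finset (Finset α))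
    (hC₁ : ∀ K ∈ C₁, (K : Set α) ⊆ E₁) (hC₂ : ∀ K ∈ C₂, (K : Set α) ⊆ E₂)
    (e₁ e₂ : α)
    (he₁ : e₁ ∉ E₁ ∪ E₂) (he₂ : e₂ ∉ E₁ ∪ E₂)
    (hw₁ : ∑ K ∈ C₁, (2 : ℝ) ^ (-(K.card : ℤ)) ≤ 1 / 2)
    (hw₂ : ∑ K ∈ C₂, (2 : ℝ) ^ (-(K.card : ℤ)) ≤ 1 / 2) :
    ∑ K ∈ (C₁.image (insert e₁) ∪ C₂.image (insert e₂)),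
      (2 : ℝ) ^ (-(K.card : ℤ)) ≤ 1 / 2 := by
  have h₁ : ∀ K ∈ C₁, e₁ ∉ K := fun K hK h ↦ he₁ (Or.inl (hC₁ K hK h))
  have h₂ : ∀ K ∈ C₂, e₂ ∉ K := fun K hK h ↦ he₂ (Or.inr (hC₂ K hK h))
  calc cutWeight (C₁.image (insert e₁) ∪ C₂.image (insert e₂))
      ≤ cutWeight (C₁.image (insert e₁)) + cutWeight (C₂.image (insert e₂)) :=
        cutWeight_union_le _ _
    _ = cutWeight C₁ / 2 + cutWeight C₂ / 2 := by
        rw [cutWeight_image_insert h₁, cutWeight_image_insert h₂]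
    _ ≤ 1 / 2 := by unfold cutWeight; linarith

open Classical in
/-- Inductive weight computation for splitting cores: if `C₁, C₂` are sets of cuts
(of edges of trees `T₁`, `T₂` with edge sets `E₁`, `E₂`) each of total weight
`∑ 2^(-|K|) ≤ 1/2`, and `e₁ ≠ e₂` are edges belonging to neither tree, then
`C = {K ∪ {e₁} : K ∈ C₁} ∪ {K ∪ {e₂} : K ∈ C₂}` has total weight `≤ 1/2`. -/
theorem splitting_core_weight {α : Type*} (E₁ E₂ : Set α)
    (C₁ C₂ : Finset (Finset α))
    (hC₁ : ∀ K ∈ C₁, (K : Set α) ⊆ E₁) (hC₂ : ∀ K ∈ C₂, (K : Set α) ⊆ E₂)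
    (e₁ e₂ : α) (hne : e₁ ≠ e₂)
    (he₁ : e₁ ∉ E₁ ∪ E₂) (he₂ : e₂ ∉ E₁ ∪ E₂)
    (hw₁ : ∑ K ∈ C₁, (2 : ℝ) ^ (-(K.card : ℤ)) ≤ 1 / 2)
    (hw₂ : ∑ K ∈ C₂, (2 : ℝ) ^ (-(K.card : ℤ)) ≤ 1 / 2) :
    ∑ K ∈ (C₁.image (insert e₁) ∪ C₂.image (insert e₂)),
      (2 : ℝ) ^ (-(K.card : ℤ)) ≤ 1 / 2 :=
  splitting_core_weight_general E₁ E₂ C₁ C₂ hC₁ hC₂ e₁ e₂ he₁ he₂ hw₁ hw₂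
end
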